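/- arXiv:2105.06313 — 2 statements merged into one kernel-verified Lean document; each statement's English description precedes it below -/
import Mathlib

section
/- If the message function f satisfies the sure thing principle and two agents i, j with partitions P_i, P_j have different message functions (f_i ≠ f_j), then P_i is strictly coarser than P_i ∨ W_j, or P_j is strictly coarser than P_j ∨ W_i, where W_i, W_j are the respective working partitions and ∨ denotes the join (coarsest common refinement). -/
/-- The block of the partition (setoid) `P` containing `x`. -/
def blk {X : Type*} (P : Setoid X) (x : X) : Set X := {y | P.r x y}

/-- The message sent at state `x` by an agent with information `P`,
given the message function `f`. -/
def msg {X A : Type*} (f : Set X → A) (P : Setoid X) (x : X) : A := f (blk P x)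

/-- The working partition of `P` induced by the message function `f`:
two states are equivalent iff the same message is sent at them. -/
def wp {X A : Type*} (f : Set X → A) (P : Setoid X) : Setoid X := Setoid.ker (msg f P)

/-- The sure thing principle: for any nonempty `S` and any partition of `S`
into nonempty blocks all mapped by `f` to `a`, `f S = a`. -/
def STPred {X A : Type*} (f : Set X → A) : Prop :=
  ∀ (S : Set X) (C : Set (Set X)) (a : A), S.Nonempty →
    (∀ B ∈ C, B.Nonempty) → C.PairwiseDisjoint id → ⋃₀ C = S →
    (∀ B ∈ C, f B = a) → f S = a

open scoped Classical in
/- The update function on profiles of partitions induced by the graph `G`: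
if `i` has senders, `i` refines her partition by joining (in the refinement
order: `⊓` in the `Setoid` order, which is the coarsest common refinement)
with the working partitions of all her senders; else her partition stays put.
Note: in the `Setoid` order, smaller = finer, so the paper's coarsening order
`P ≤ Q` ("Q refines P") is `Q ≤ P` here, the paper's join is `⊓`, and the
paper's meet is `⊔`. -/
noncomputable def update {X A I : Type*} (f : Set X → A) (G : I → I → Prop)
    (P : I → Setoid X) (i : I) : Setoid X :=
  if (∃ j, G j i) then ⨅ j ∈ {j | G j i}, (P i ⊓ wp f (P j)) else P i

/-!
If neither join is a strict refinement, then `Pᵢ` refines `Wⱼ` and `Pⱼ` refines `Wᵢ`, so the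
common coarsening `Q = Pᵢ ⊔ Pⱼ` refines both working partitions. Each block of `Q` is then a
disjoint union of `Pᵢ`-blocks carrying one and the same message, so by the sure thing principle
`f` takes that message on the `Q`-block; the same holds for `Pⱼ`, hence `fᵢ = fⱼ`.
-/

lemma blk_eq_of_rel {X : Type*} (P : Setoid X) {x y : X} (h : P.r x y) : blk P x = blk P y := by
  ext z
  exact ⟨fun hz => P.trans (P.symm h) hz, fun hz => P.trans h hz⟩

lemma le_wp {X A : Type*} (f : Set X → A) (P : Setoid X) : P ≤ wp f P := fun _ _ h =>
  congrArg f (blk_eq_of_rel P h)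

lemma STPred.apply_blk_eq_msg {X A : Type*} {f : Set X → A} (hstp : STPred f)
    {P Q : Setoid X} (hPQ : P ≤ Q) (hQ : Q ≤ wp f P) (x : X) :
    f (blk Q x) = msg f P x := by
  apply hstp (blk Q x) (blk P '' blk Q x) (msg f P x) ⟨x, Q.refl x⟩
  · rintro _ ⟨y, -, rfl⟩
    exact ⟨y, P.refl y⟩
  · rintro _ ⟨y, -, rfl⟩ _ ⟨y', -, rfl⟩ hne
    refine Set.disjoint_left.2 fun z hz hz' => hne ?_
    exact blk_eq_of_rel P (P.trans hz (P.symm hz'))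
  · ext z
    simp only [Set.sUnion_image, Set.mem_iUnion, exists_prop]
    exact ⟨fun ⟨y, hy, hz⟩ => Q.trans hy (hPQ hz), fun hz => ⟨z, hz, P.refl z⟩⟩
  · rintro _ ⟨y, hy, rfl⟩
    exact (hQ hy).symm

theorem STPred.msg_eq_of_le_wp {X A : Type*} {f : Set X → A} (hstp : STPred f)
    {Pi Pj : Setoid X} (hi : Pi ≤ wp f Pj) (hj : Pj ≤ wp f Pi) : msg f Pi = msg f Pj := by
  funext x
  rw [← hstp.apply_blk_eq_msg le_sup_left (sup_le (le_wp f Pi) hj),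
    ← hstp.apply_blk_eq_msg le_sup_right (sup_le hi (le_wp f Pj))]

/-- Under the STP, if two agents' message functions differ, then `Pᵢ`
is strictly coarser than `Pᵢ ∨ Wⱼ` or `Pⱼ` is strictly coarser than `Pⱼ ∨ Wᵢ`.
(The paper's join — coarsest common refinement — is `⊓` in the `Setoid` order, and
"strictly coarser" in the paper order is `<` reversed here.) -/
theorem stmt_4 {X A : Type*} (f : Set X → A) (hstp : STPred f)
    (Pi Pj : Setoid X) (hne : msg f Pi ≠ msg f Pj) :
    Pi ⊓ wp f Pj < Pi ∨ Pj ⊓ wp f Pi < Pj := by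
  rw [inf_lt_left, inf_lt_left, ← not_and_or]
  exact fun ⟨hi, hj⟩ => hne (hstp.msg_eq_of_le_wp hi hj)
end

section
/- There exists a two-state example showing that common knowledge of the profile of messages at every state does not imply agreement when the STP fails: with X = {x,y}, f({x}) = f({y}) = a, f({x,y}) = b, P_1 the discrete partition and P_2 the trivial partition, the event of messages sent is common knowledge at every state, yet f_1 ≠ f_2, and moreover W_1 = W_2 = {X}. -/
/-!
Let `f S` be `true` exactly when `S` is the whole state space. Every block of the discrete
partition is a singleton, hence proper, so agent 1 always sends `false`; the only block of the
trivial partition is the whole space, so agent 2 always sends `true`. Both message functions are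
constant: the working partitions are trivial and the event of messages sent is everything, so it
is common knowledge, yet the messages differ.
-/

section

variable {X A : Type*}

lemma blk_bot (x : X) : blk (⊥ : Setoid X) x = {x} := by
  ext y
  simp [blk, eq_comm]

lemma blk_top (x : X) : blk (⊤ : Setoid X) x = Set.univ := by
  ext y
  simp [blk, Setoid.top_def]

lemma wp_eq_top_of_msg_eq {f : Set X → A} {P : Setoid X} {a : A} (h : ∀ x, msg f P x = a) :
    wp f P = ⊤ := by
  refine eq_top_iff.mpr fun x y _ => ?_
  exact Setoid.ker_def.mpr ((h x).trans (h y).symm)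

open scoped Classical in
noncomputable def isUniv (S : Set X) : Bool := decide (S = Set.univ)

lemma isUniv_singleton [Nontrivial X] (x : X) : isUniv ({x} : Set X) = false := by
  simp [isUniv, Set.singleton_ne_univ]

lemma isUniv_univ : isUniv (Set.univ : Set X) = true := by
  simp [isUniv]

lemma msg_isUniv_bot [Nontrivial X] (x : X) : msg isUniv (⊥ : Setoid X) x = false := by
  rw [msg, blk_bot, isUniv_singleton]

lemma msg_isUniv_top (x : X) : msg isUniv (⊤ : Setoid X) x = true := by
  rw [msg, blk_top, isUniv_univ]

end

/-- A two-state example where the STP fails: the profile of messages is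
common knowledge at every state, yet the agents' message functions differ, and both
working partitions are trivial. Here `P₁ = ⊥` is the discrete partition, `P₂ = ⊤` the
trivial one, and the paper's meet of partitions is `⊔` in the `Setoid` order. -/
theorem stmt_14 :
    ∃ (f : Set Bool → Bool) (a b : Bool), a ≠ b ∧
      f {false} = a ∧ f {true} = a ∧ f Set.univ = b ∧
      (∀ x, blk ((⊥ : Setoid Bool) ⊔ (⊤ : Setoid Bool)) x ⊆
        {x' | msg f (⊥ : Setoid Bool) x' = msg f (⊥ : Setoid Bool) x ∧
              msg f (⊤ : Setoid Bool) x' = msg f (⊤ : Setoid Bool) x}) ∧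
      msg f (⊥ : Setoid Bool) ≠ msg f (⊤ : Setoid Bool) ∧
      wp f (⊥ : Setoid Bool) = ⊤ ∧ wp f (⊤ : Setoid Bool) = ⊤ := by
  refine ⟨isUniv, false, true, Bool.false_ne_true, isUniv_singleton false,
    isUniv_singleton true, isUniv_univ, ?_, ?_, wp_eq_top_of_msg_eq msg_isUniv_bot,
    wp_eq_top_of_msg_eq msg_isUniv_top⟩
  · intro x x' _
    simp only [Set.mem_ofPred_eq, msg_isUniv_bot, msg_isUniv_top, and_self]
  · intro h
    simpa [msg_isUniv_bot, msg_isUniv_top] using congrFun h true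
end
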